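/- If a fully 2-colored grid admits a painting, then it admits a 2-painting, i.e., a painting in which every panel consists of at most two pieces (so each purple cell is split into exactly one red piece and one blue piece). -/
import Mathlib


open Set Topology

/-- The two colors. -/
inductive PColor : Type
  | red : PColor
  | blue : PColor
  deriving DecidableEq

/-- A set in the plane is "nicely connected" (it forms one connected polygon-like
piece): the interior of its closure is connected and the set clings to this
interior.  In particular, two parts sharing only a single corner point do *not*
together form a nicely connected set. -/
def NicelyConnected (A : Set (ℝ × ℝ)) : Prop :=
  IsConnected (interior (closure A)) ∧ A ⊆ closure (interior (closure A))

/-- A 2-colored grid: an `m × n` rectangular grid (`m, n ≥ 1`) of closed unit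
square cells in the plane, each cell being assigned a set of colors among
red and blue.  A cell with both colors is purple, a cell with no color is white. -/
structure ColoredGrid : Type where
  m : ℕ
  n : ℕ
  hm : 0 < m
  hn : 0 < n
  chi : Fin m × Fin n → Finset PColor

namespace ColoredGrid

variable (G : ColoredGrid)

/-- The closed unit square cell at position `s`. -/
def cellSet (s : Fin G.m × Fin G.n) : Set (ℝ × ℝ) :=
  Set.Icc ((s.1.1 : ℝ), (s.2.1 : ℝ)) ((s.1.1 : ℝ) + 1, (s.2.1 : ℝ) + 1)

def IsPurpleCell (s : Fin G.m × Fin G.n) : Prop :=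
  G.chi s = {PColor.red, PColor.blue}

def IsWhiteCell (s : Fin G.m × Fin G.n) : Prop :=
  G.chi s = ∅

/-- A (connected) painting of a 2-colored grid: each non-white cell is
partitioned into nonempty parts, one for each of its assigned colors (its
panel), so that each color globally forms a connected polygon and the two
colored polygons are disjoint. -/
structure Painting : Type where
  part : (Fin G.m × Fin G.n) → PColor → Set (ℝ × ℝ)
  part_subset : ∀ s c, part s c ⊆ G.cellSet s
  part_nonempty : ∀ s c, c ∈ G.chi s → (part s c).Nonempty
  part_empty : ∀ s c, c ∉ G.chi s → part s c = ∅
  part_covers : ∀ s, (G.chi s).Nonempty →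
    part s PColor.red ∪ part s PColor.blue = G.cellSet s
  colors_disjoint : Disjoint (⋃ s, part s PColor.red) (⋃ s, part s PColor.blue)
  colors_connected : ∀ c : PColor, NicelyConnected (⋃ s, part s c)

/-- Horizontal/vertical adjacency of cells. -/
def adjCell (s t : Fin G.m × Fin G.n) : Prop :=
  (s.1 = t.1 ∧ (s.2.1 + 1 = t.2.1 ∨ t.2.1 + 1 = s.2.1)) ∨
  (s.2 = t.2 ∧ (s.1.1 + 1 = t.1.1 ∨ t.1.1 + 1 = s.1.1))

/-- Two cells lie in the same region if they are joined by a chain of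
horizontally/vertically adjacent cells all having equal color assignments. -/
def sameRegion : (Fin G.m × Fin G.n) → (Fin G.m × Fin G.n) → Prop :=
  Relation.ReflTransGen (fun a b => G.adjCell a b ∧ G.chi a = G.chi b)

/-- The region (maximal connected set of equally-assigned cells) of a cell. -/
def regionOf (s : Fin G.m × Fin G.n) : Set (Fin G.m × Fin G.n) :=
  {t | G.sameRegion s t}

def IsRegion (R : Set (Fin G.m × Fin G.n)) : Prop :=
  ∃ s, R = G.regionOf s

/-- The subset of the plane covered by the cells of `R`. -/
def regionUnion (R : Set (Fin G.m × Fin G.n)) : Set (ℝ × ℝ) :=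
  ⋃ s ∈ R, G.cellSet s

/-- A region all of whose cells are assigned exactly the single color `c`. -/
def IsMonoRegion (c : PColor) (R : Set (Fin G.m × Fin G.n)) : Prop :=
  G.IsRegion R ∧ ∀ s ∈ R, G.chi s = {c}

/-- A purple region. -/
def IsPurpleRegion (R : Set (Fin G.m × Fin G.n)) : Prop :=
  G.IsRegion R ∧ ∀ s ∈ R, G.IsPurpleCell s

/-- The region `R` is adjacent to the region `P`. -/
def AdjacentTo (R P : Set (Fin G.m × Fin G.n)) : Prop :=
  ∃ s ∈ R, ∃ t ∈ P, G.adjCell s t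

/-- The panel of the painting `pa` at cell `s` has at most `t` pieces
(connected components of its red part together with connected components of
its blue part). -/
def piecesLE (pa : G.Painting) (s : Fin G.m × Fin G.n) (t : ℕ) : Prop :=
  ∃ T : Finset (Set (ℝ × ℝ)), T.card ≤ t ∧
    ∀ c : PColor, ∀ x ∈ pa.part s c, connectedComponentIn (pa.part s c) x ∈ T

/-- The panel of the painting `pa` at cell `s` has at most `t` pieces of color `c`. -/
def colorPiecesLE (pa : G.Painting) (s : Fin G.m × Fin G.n) (c : PColor) (t : ℕ) : Prop :=
  ∃ T : Finset (Set (ℝ × ℝ)), T.card ≤ t ∧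
    ∀ x ∈ pa.part s c, connectedComponentIn (pa.part s c) x ∈ T

end ColoredGrid


open Set Topology
open scoped Classical

noncomputable section MagicF

noncomputable def dmE : ℕ → ℚ × ℚ × ℚ := fun n => (Denumerable.eqv (ℚ × ℚ × ℚ)).symm n

lemma dmE_surj : Function.Surjective dmE :=
  (Denumerable.eqv (ℚ × ℚ × ℚ)).symm.surjective

noncomputable def dmLo (n : ℕ) : ℝ :=
  if ((dmE n).1 : ℝ) < ((dmE n).2.1 : ℝ) then ((dmE n).1 : ℝ) else 0

noncomputable def dmHi (n : ℕ) : ℝ :=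
  if ((dmE n).1 : ℝ) < ((dmE n).2.1 : ℝ) then ((dmE n).2.1 : ℝ) else 1

lemma dmLo_lt_dmHi (n : ℕ) : dmLo n < dmHi n := by
  unfold dmLo dmHi
  by_cases h : ((dmE n).1 : ℝ) < ((dmE n).2.1 : ℝ)
  · rw [if_pos h, if_pos h]; exact h
  · rw [if_neg h, if_neg h]; norm_num

noncomputable def dmTg (n : ℕ) : ℝ :=
  if (0 : ℚ) < (dmE n).2.2 ∧ (dmE n).2.2 < 1 then ((dmE n).2.2 : ℝ) else 1/2

lemma dmTg_pos (n : ℕ) : 0 < dmTg n := by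
  unfold dmTg
  by_cases h : (0 : ℚ) < (dmE n).2.2 ∧ (dmE n).2.2 < 1
  · rw [if_pos h]; exact_mod_cast h.1
  · rw [if_neg h]; norm_num

lemma dmTg_lt_one (n : ℕ) : dmTg n < 1 := by
  unfold dmTg
  by_cases h : (0 : ℚ) < (dmE n).2.2 ∧ (dmE n).2.2 < 1
  · rw [if_pos h]; exact_mod_cast h.2
  · rw [if_neg h]; norm_num

lemma exists_rat_in (n : ℕ) :
    ∃ q : ℚ, dmLo n - n * Real.sqrt 2 < (q : ℝ) ∧ (q : ℝ) < dmHi n - n * Real.sqrt 2 :=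
  exists_rat_btwn (by linarith [dmLo_lt_dmHi n])

noncomputable def qpt (n : ℕ) : ℚ := Classical.choose (exists_rat_in n)

noncomputable def xpt (n : ℕ) : ℝ := (qpt n : ℝ) + n * Real.sqrt 2

lemma xpt_mem (n : ℕ) : xpt n ∈ Ioo (dmLo n) (dmHi n) := by
  obtain ⟨h1, h2⟩ := Classical.choose_spec (exists_rat_in n)
  unfold xpt qpt
  simp only [mem_Ioo]
  constructor
  · linarith
  · linarith

lemma xpt_inj : Function.Injective xpt := by
  intro n m h
  by_contra hnm
  unfold xpt at h
  have hm : ((n : ℝ) - m) * Real.sqrt 2 = (qpt m : ℝ) - qpt n := by ring_nf; ring_nf at h; linarith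
  have hnm' : ((n:ℚ) - m) ≠ 0 := by
    intro hz
    have : (n : ℚ) = m := by linarith [sub_eq_zero.mp hz]
    exact hnm (by exact_mod_cast this)
  have : Real.sqrt 2 = (((qpt m - qpt n) / ((n:ℚ) - m) : ℚ) : ℝ) := by
    have hnm'' : ((n:ℝ) - m) ≠ 0 := by exact_mod_cast hnm'
    push_cast
    rw [eq_div_iff hnm'']
    linarith [hm]
  exact irrational_sqrt_two ⟨_, this.symm⟩

noncomputable def magicF (x : ℝ) : ℝ :=
  if h : ∃ n, x = xpt n then dmTg (Classical.choose h) else 1/2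

lemma magicF_pos (x : ℝ) : 0 < magicF x := by
  unfold magicF
  by_cases h : ∃ n, x = xpt n
  · rw [dif_pos h]; exact dmTg_pos _
  · rw [dif_neg h]; norm_num

lemma magicF_lt_one (x : ℝ) : magicF x < 1 := by
  unfold magicF
  by_cases h : ∃ n, x = xpt n
  · rw [dif_pos h]; exact dmTg_lt_one _
  · rw [dif_neg h]; norm_num

lemma magicF_xpt (n : ℕ) : magicF (xpt n) = dmTg n := by
  unfold magicF
  have h : ∃ k, xpt n = xpt k := ⟨n, rfl⟩
  rw [dif_pos h]
  have := Classical.choose_spec h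
  rw [xpt_inj this.symm]

lemma magicF_dense_gt {a b c : ℝ} (hab : a < b) (hc : c < 1) :
    ∃ x ∈ Ioo a b, c < magicF x := by
  obtain ⟨qa, ha1, ha2⟩ := exists_rat_btwn hab
  obtain ⟨qb, hb1, hb2⟩ := exists_rat_btwn ha2
  obtain ⟨t, ht1, ht2⟩ := exists_rat_btwn (show max c 0 < 1 by simp [hc])
  obtain ⟨n, hn⟩ := dmE_surj (qa, qb, t)
  have hqaqb : ((qa:ℚ) : ℝ) < ((qb:ℚ) : ℝ) := hb1
  have hlo : dmLo n = (qa : ℝ) := by unfold dmLo; rw [hn]; exact if_pos hqaqb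
  have hhi : dmHi n = (qb : ℝ) := by unfold dmHi; rw [hn]; exact if_pos hqaqb
  have htg : dmTg n = (t : ℝ) := by
    unfold dmTg; rw [hn]
    have h0 : (0:ℚ) < t := by exact_mod_cast lt_of_le_of_lt (le_max_right c 0) ht1
    have h1 : t < (1:ℚ) := by exact_mod_cast ht2
    exact if_pos ⟨h0, h1⟩
  refine ⟨xpt n, ⟨?_, ?_⟩, ?_⟩
  · have := (xpt_mem n).1; rw [hlo] at this; linarith
  · have := (xpt_mem n).2; rw [hhi] at this; linarith
  · rw [magicF_xpt, htg]
    exact lt_of_le_of_lt (le_max_left c 0) ht1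

lemma magicF_dense_lt {a b c : ℝ} (hab : a < b) (hc : 0 < c) :
    ∃ x ∈ Ioo a b, magicF x < c := by
  obtain ⟨qa, ha1, ha2⟩ := exists_rat_btwn hab
  obtain ⟨qb, hb1, hb2⟩ := exists_rat_btwn ha2
  obtain ⟨t, ht1, ht2⟩ := exists_rat_btwn (show (0:ℝ) < min c 1 by simp [hc])
  obtain ⟨n, hn⟩ := dmE_surj (qa, qb, t)
  have hqaqb : ((qa:ℚ) : ℝ) < ((qb:ℚ) : ℝ) := hb1
  have hlo : dmLo n = (qa : ℝ) := by unfold dmLo; rw [hn]; exact if_pos hqaqb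
  have hhi : dmHi n = (qb : ℝ) := by unfold dmHi; rw [hn]; exact if_pos hqaqb
  have htg : dmTg n = (t : ℝ) := by
    unfold dmTg; rw [hn]
    have h0 : (0:ℚ) < t := by exact_mod_cast ht1
    have h1 : t < (1:ℚ) := by exact_mod_cast lt_of_lt_of_le ht2 (min_le_right c 1)
    exact if_pos ⟨h0, h1⟩
  refine ⟨xpt n, ⟨?_, ?_⟩, ?_⟩
  · have := (xpt_mem n).1; rw [hlo] at this; linarith
  · have := (xpt_mem n).2; rw [hhi] at this; linarith
  · rw [magicF_xpt, htg]
    exact lt_of_lt_of_le ht2 (min_le_left c 1)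

end MagicF

/-- The generic comb lemma: a union of vertical "sticks" over an interval is preconnected,
provided there is a dense set `D` of good positions such that from any stick one can reach
a level shared with all good sticks. -/
lemma comb_preconnected (a b : ℝ) (hab : a < b) (P : ℝ → Set ℝ)
    (hpc : ∀ x, IsPreconnected (P x))
    (hne : ∀ x ∈ Ioo a b, (P x).Nonempty)
    (D : Set ℝ)
    (hD : ∀ x ∈ Ioo a b, ∀ ε > 0, ∃ x' ∈ D ∩ Ioo a b, |x' - x| < ε)
    (hlev : ∀ x ∈ Ioo a b, ∃ y0 ∈ P x, ∀ x' ∈ D, y0 ∈ P x') :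
    IsPreconnected {p : ℝ × ℝ | p.1 ∈ Ioo a b ∧ p.2 ∈ P p.1} := by
  set A := {p : ℝ × ℝ | p.1 ∈ Ioo a b ∧ p.2 ∈ P p.1} with hA
  intro u v hu hv hcov ⟨p, hpA, hpu⟩ ⟨q, hqA, hqv⟩
  by_contra hempty
  rw [not_nonempty_iff_eq_empty] at hempty
  -- sticks
  set St : ℝ → Set (ℝ × ℝ) := fun x => {x} ×ˢ P x with hSt
  have hStA : ∀ x ∈ Ioo a b, St x ⊆ A := by
    rintro x hx ⟨z1, z2⟩ ⟨hz1, hz2⟩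
    simp only [mem_singleton_iff] at hz1
    subst hz1
    exact ⟨hx, hz2⟩
  have hStpc : ∀ x, IsPreconnected (St x) :=
    fun x => isPreconnected_singleton.prod (hpc x)
  -- dichotomy
  have dich : ∀ x ∈ Ioo a b, St x ⊆ u ∨ St x ⊆ v := by
    intro x hx
    by_contra hcon
    push_neg at hcon
    obtain ⟨h1, h2⟩ := hcon
    obtain ⟨z, hzSt, hzu⟩ := not_subset.mp h1
    obtain ⟨w, hwSt, hwv⟩ := not_subset.mp h2
    have hzv : z ∈ v := by
      rcases hcov (hStA x hx hzSt) with h | h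
      · exact absurd h hzu
      · exact h
    have := hStpc x u v hu hv (fun y hy => hcov (hStA x hx hy)) ⟨w, hwSt, ?_⟩ ⟨z, hzSt, hzv⟩
    · obtain ⟨y, hySt, hyuv⟩ := this
      have : y ∈ A ∩ (u ∩ v) := ⟨hStA x hx hySt, hyuv.1, hyuv.2⟩
      rw [hempty] at this
      exact this
    · rcases hcov (hStA x hx hwSt) with h | h
      · exact h
      · exact absurd h hwv
  -- classes
  set XU := {x | x ∈ Ioo a b ∧ St x ⊆ u} with hXU
  set XV := {x | x ∈ Ioo a b ∧ St x ⊆ v} with hXV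
  have hXdisj : ∀ x, ¬(x ∈ XU ∧ x ∈ XV) := by
    rintro x ⟨⟨hx, hxu⟩, ⟨_, hxv⟩⟩
    obtain ⟨y, hy⟩ := hne x hx
    have : (x, y) ∈ A ∩ (u ∩ v) :=
      ⟨hStA x hx ⟨rfl, hy⟩, hxu ⟨rfl, hy⟩, hxv ⟨rfl, hy⟩⟩
    rw [hempty] at this; exact this
  set TU := D ∩ XU with hTU
  set TV := D ∩ XV with hTV
  -- claim 1 : around a U-stick, all good sticks are U-sticks
  have claim1 : ∀ x ∈ XU, ∃ δ > 0, ∀ x' ∈ D ∩ Ioo a b, |x' - x| < δ → x' ∈ XU := by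
    rintro x ⟨hx, hxu⟩
    obtain ⟨y0, hy0, hy0'⟩ := hlev x hx
    have hmem : (x, y0) ∈ u := hxu ⟨rfl, hy0⟩
    obtain ⟨δ, hδ, hball⟩ := Metric.isOpen_iff.mp hu (x, y0) hmem
    refine ⟨δ, hδ, ?_⟩
    rintro x' ⟨hx'D, hx'I⟩ hd
    have hmem' : (x', y0) ∈ u := by
      apply hball
      rw [Metric.mem_ball, Prod.dist_eq, Real.dist_eq, Real.dist_eq]
      simp only [sub_self, abs_zero]
      exact max_lt hd hδ
    have hy0P : y0 ∈ P x' := hy0' x' hx'D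
    rcases dich x' hx'I with h | h
    · exact ⟨hx'I, h⟩
    · exfalso
      have : (x', y0) ∈ A ∩ (u ∩ v) := ⟨hStA x' hx'I ⟨rfl, hy0P⟩, hmem', h ⟨rfl, hy0P⟩⟩
      rw [hempty] at this; exact this
  have claim1v : ∀ x ∈ XV, ∃ δ > 0, ∀ x' ∈ D ∩ Ioo a b, |x' - x| < δ → x' ∈ XV := by
    rintro x ⟨hx, hxv⟩
    obtain ⟨y0, hy0, hy0'⟩ := hlev x hx
    have hmem : (x, y0) ∈ v := hxv ⟨rfl, hy0⟩
    obtain ⟨δ, hδ, hball⟩ := Metric.isOpen_iff.mp hv (x, y0) hmem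
    refine ⟨δ, hδ, ?_⟩
    rintro x' ⟨hx'D, hx'I⟩ hd
    have hmem' : (x', y0) ∈ v := by
      apply hball
      rw [Metric.mem_ball, Prod.dist_eq, Real.dist_eq, Real.dist_eq]
      simp only [sub_self, abs_zero]
      exact max_lt hd hδ
    have hy0P : y0 ∈ P x' := hy0' x' hx'D
    rcases dich x' hx'I with h | h
    · exfalso
      have : (x', y0) ∈ A ∩ (u ∩ v) := ⟨hStA x' hx'I ⟨rfl, hy0P⟩, h ⟨rfl, hy0P⟩, hmem'⟩
      rw [hempty] at this; exact this
    · exact ⟨hx'I, h⟩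
  -- claim 2
  have claim2u : ∀ x ∈ XU, x ∉ closure TV := by
    intro x hxU hcl
    obtain ⟨δ, hδ, hδ'⟩ := claim1 x hxU
    obtain ⟨x', hx'TV, hx'd⟩ := Metric.mem_closure_iff.mp hcl δ hδ
    have hx'XU : x' ∈ XU := hδ' x' ⟨hx'TV.1, hx'TV.2.1⟩ (by rw [Real.dist_eq, abs_sub_comm] at hx'd; exact hx'd)
    exact hXdisj x' ⟨hx'XU, hx'TV.2⟩
  have claim2v : ∀ x ∈ XV, x ∉ closure TU := by
    intro x hxV hcl
    obtain ⟨δ, hδ, hδ'⟩ := claim1v x hxV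
    obtain ⟨x', hx'TU, hx'd⟩ := Metric.mem_closure_iff.mp hcl δ hδ
    have hx'XV : x' ∈ XV := hδ' x' ⟨hx'TU.1, hx'TU.2.1⟩ (by rw [Real.dist_eq, abs_sub_comm] at hx'd; exact hx'd)
    exact hXdisj x' ⟨hx'TU.2, hx'XV⟩
  -- claim 3
  have claim3 : Ioo a b ⊆ closure TU ∪ closure TV := by
    intro x hx
    rw [← closure_union]
    rw [Metric.mem_closure_iff]
    intro ε hε
    obtain ⟨x', ⟨hx'D, hx'I⟩, hx'd⟩ := hD x hx ε hε
    rcases dich x' hx'I with h | h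
    · exact ⟨x', Or.inl ⟨hx'D, hx'I, h⟩, by rw [Real.dist_eq, abs_sub_comm]; exact hx'd⟩
    · exact ⟨x', Or.inr ⟨hx'D, hx'I, h⟩, by rw [Real.dist_eq, abs_sub_comm]; exact hx'd⟩
  -- conclude using preconnectedness of the interval
  have hpI : IsPreconnected (Ioo a b) := isPreconnected_Ioo
  have hXU_mem : ∀ x, x ∈ XU → x ∈ (closure TV)ᶜ := fun x hx => claim2u x hx
  have hXV_mem : ∀ x, x ∈ XV → x ∈ (closure TU)ᶜ := fun x hx => claim2v x hx
  have hp1 : p.1 ∈ XU := by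
    have hpI' := hpA.1
    rcases dich p.1 hpI' with h | h
    · exact ⟨hpI', h⟩
    · exfalso
      have hpSt : p ∈ St p.1 := ⟨rfl, hpA.2⟩
      have : p ∈ A ∩ (u ∩ v) := ⟨hpA, hpu, h hpSt⟩
      rw [hempty] at this; exact this
  have hq1 : q.1 ∈ XV := by
    have hqI' := hqA.1
    rcases dich q.1 hqI' with h | h
    · exfalso
      have hqSt : q ∈ St q.1 := ⟨rfl, hqA.2⟩
      have : q ∈ A ∩ (u ∩ v) := ⟨hqA, h hqSt, hqv⟩
      rw [hempty] at this; exact this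
    · exact ⟨hqI', h⟩
  have := hpI (closure TV)ᶜ (closure TU)ᶜ (isClosed_closure.isOpen_compl)
    (isClosed_closure.isOpen_compl)
    (fun x hx => by
      rcases dich x hx with h | h
      · exact Or.inl (hXU_mem x ⟨hx, h⟩)
      · exact Or.inr (hXV_mem x ⟨hx, h⟩))
    ⟨p.1, hpA.1, hXU_mem _ hp1⟩ ⟨q.1, hqA.1, hXV_mem _ hq1⟩
  obtain ⟨z, hzI, hz1, hz2⟩ := this
  rcases claim3 hzI with h | h
  · exact hz2 h
  · exact hz1 h
section CellSets
open PColor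

/-- fiber of the red/blue exotic set over `x`, for a cell with lower corner `(c1, c2)` -/
noncomputable def cellFib (c2 : ℝ) : PColor → ℝ → Set ℝ
  | red, x => Set.Ioo c2 (c2 + magicF x)
  | blue, x => Set.Ico (c2 + magicF x) (c2 + 1)

/-- the exotic subset of the open cell with lower corner `(c1, c2)` -/
noncomputable def cellA (c1 c2 : ℝ) (c : PColor) : Set (ℝ × ℝ) :=
  {p : ℝ × ℝ | p.1 ∈ Set.Ioo c1 (c1 + 1) ∧ p.2 ∈ cellFib c2 c p.1}

lemma cellFib_subset (c2 : ℝ) (c : PColor) (x : ℝ) :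
    cellFib c2 c x ⊆ Set.Ioo c2 (c2 + 1) := by
  cases c
  · exact Set.Ioo_subset_Ioo le_rfl (by linarith [magicF_lt_one x])
  · exact fun y hy => ⟨lt_of_lt_of_le (by linarith [magicF_pos x]) hy.1, hy.2⟩

lemma cellFib_union (c2 : ℝ) (x : ℝ) :
    cellFib c2 red x ∪ cellFib c2 blue x = Set.Ioo c2 (c2 + 1) := by
  apply Set.Subset.antisymm
  · rintro y (hy | hy)
    · exact cellFib_subset c2 red x hy
    · exact cellFib_subset c2 blue x hy
  · intro y hy
    by_cases h : y < c2 + magicF x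
    · exact Or.inl ⟨hy.1, h⟩
    · exact Or.inr ⟨not_lt.mp h, hy.2⟩

lemma cellFib_disjoint (c2 : ℝ) (x : ℝ) :
    cellFib c2 red x ∩ cellFib c2 blue x = ∅ := by
  ext y
  simp only [Set.mem_inter_iff, Set.mem_empty_iff_false, iff_false]
  rintro ⟨⟨_, h1⟩, ⟨h2, _⟩⟩
  exact absurd h1 (not_lt.mpr h2)

lemma cellFib_nonempty (c2 : ℝ) (c : PColor) (x : ℝ) : (cellFib c2 c x).Nonempty := by
  cases c
  · exact Set.nonempty_Ioo.mpr (by linarith [magicF_pos x])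
  · exact Set.nonempty_Ico.mpr (by linarith [magicF_lt_one x])

lemma cellFib_preconnected (c2 : ℝ) (c : PColor) (x : ℝ) : IsPreconnected (cellFib c2 c x) := by
  cases c
  · exact isPreconnected_Ioo
  · exact isPreconnected_Ico

lemma cellA_subset_open (c1 c2 : ℝ) (c : PColor) :
    cellA c1 c2 c ⊆ Set.Ioo c1 (c1 + 1) ×ˢ Set.Ioo c2 (c2 + 1) := by
  rintro p ⟨h1, h2⟩
  exact ⟨h1, cellFib_subset c2 c p.1 h2⟩

lemma cellA_union (c1 c2 : ℝ) :
    cellA c1 c2 red ∪ cellA c1 c2 blue = Set.Ioo c1 (c1 + 1) ×ˢ Set.Ioo c2 (c2 + 1) := by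
  apply Set.Subset.antisymm
  · rintro p (hp | hp)
    · exact cellA_subset_open c1 c2 red hp
    · exact cellA_subset_open c1 c2 blue hp
  · rintro p ⟨h1, h2⟩
    rw [← cellFib_union c2 p.1] at h2
    rcases h2 with h | h
    · exact Or.inl ⟨h1, h⟩
    · exact Or.inr ⟨h1, h⟩

lemma cellA_disjoint (c1 c2 : ℝ) : cellA c1 c2 red ∩ cellA c1 c2 blue = ∅ := by
  ext p
  simp only [Set.mem_inter_iff, Set.mem_empty_iff_false, iff_false]
  rintro ⟨⟨_, h1⟩, ⟨_, h2⟩⟩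
  have := cellFib_disjoint c2 p.1
  rw [Set.eq_empty_iff_forall_notMem] at this
  exact this p.2 ⟨h1, h2⟩

lemma cellA_nonempty (c1 c2 : ℝ) (c : PColor) : (cellA c1 c2 c).Nonempty := by
  obtain ⟨y, hy⟩ := cellFib_nonempty c2 c (c1 + 1/2)
  exact ⟨(c1 + 1/2, y), ⟨by norm_num, by norm_num⟩, hy⟩

lemma cellA_preconnected (c1 c2 : ℝ) (c : PColor) : IsPreconnected (cellA c1 c2 c) := by
  cases c
  · -- red
    apply comb_preconnected c1 (c1+1) (by linarith) (cellFib c2 red)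
      (cellFib_preconnected c2 red) (fun x _ => cellFib_nonempty c2 red x)
      {x : ℝ | 1/2 < magicF x}
    · intro x hx ε hε
      obtain ⟨x', hx'I, hx'f⟩ := magicF_dense_gt
        (show max c1 (x - ε) < min (c1+1) (x + ε) by
          rcases hx with ⟨h1, h2⟩
          apply max_lt <;> apply lt_min <;> linarith) (by norm_num : (1:ℝ)/2 < 1)
      refine ⟨x', ⟨hx'f, ?_, ?_⟩, ?_⟩
      · exact lt_of_le_of_lt (le_max_left _ _) hx'I.1
      · exact lt_of_lt_of_le hx'I.2 (min_le_left _ _)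
      · rw [abs_lt]
        constructor
        · have := lt_of_le_of_lt (le_max_right c1 (x - ε)) hx'I.1; linarith
        · have := lt_of_lt_of_le hx'I.2 (min_le_right (c1+1) (x + ε)); linarith
    · intro x _
      refine ⟨c2 + (min (magicF x) (1/2)) / 2, ⟨?_, ?_⟩, ?_⟩
      · have h1 := magicF_pos x
        have : (0:ℝ) < min (magicF x) (1/2) := lt_min h1 (by norm_num)
        linarith
      · have h1 := magicF_pos x
        have h2 : min (magicF x) (1/2) ≤ magicF x := min_le_left _ _
        have : (0:ℝ) < min (magicF x) (1/2) := lt_min h1 (by norm_num)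
        linarith
      · intro x' hx'
        have h2 : (min (magicF x) (1/2)) / 2 ≤ 1/4 := by
          have : min (magicF x) (1/2) ≤ 1/2 := min_le_right _ _
          linarith
        have h1 := magicF_pos x
        have h3 : (0:ℝ) < min (magicF x) (1/2) := lt_min h1 (by norm_num)
        have hx'f : 1/2 < magicF x' := hx'
        exact ⟨by linarith, by linarith⟩
  · -- blue
    apply comb_preconnected c1 (c1+1) (by linarith) (cellFib c2 blue)
      (cellFib_preconnected c2 blue) (fun x _ => cellFib_nonempty c2 blue x)
      {x : ℝ | magicF x < 1/2}
    · intro x hx ε hε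
      obtain ⟨x', hx'I, hx'f⟩ := magicF_dense_lt
        (show max c1 (x - ε) < min (c1+1) (x + ε) by
          rcases hx with ⟨h1, h2⟩
          apply max_lt <;> apply lt_min <;> linarith) (by norm_num : (0:ℝ) < 1/2)
      refine ⟨x', ⟨hx'f, ?_, ?_⟩, ?_⟩
      · exact lt_of_le_of_lt (le_max_left _ _) hx'I.1
      · exact lt_of_lt_of_le hx'I.2 (min_le_left _ _)
      · rw [abs_lt]
        constructor
        · have := lt_of_le_of_lt (le_max_right c1 (x - ε)) hx'I.1; linarith
        · have := lt_of_lt_of_le hx'I.2 (min_le_right (c1+1) (x + ε)); linarith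
    · intro x _
      have hM1 : max (magicF x) (1/2) < 1 := max_lt (magicF_lt_one x) (by norm_num)
      have hM2 : magicF x ≤ max (magicF x) (1/2) := le_max_left _ _
      have hM3 : (1:ℝ)/2 ≤ max (magicF x) (1/2) := le_max_right _ _
      refine ⟨c2 + (max (magicF x) (1/2) + 1) / 2, ⟨?_, ?_⟩, ?_⟩
      · linarith
      · linarith
      · intro x' hx'
        have hx'f : magicF x' < 1/2 := hx'
        exact ⟨by linarith, by linarith⟩

/-- density: the closure of each exotic set is the whole closed cell -/
lemma cellA_dense (c1 c2 : ℝ) (c : PColor) :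
    Set.Icc c1 (c1 + 1) ×ˢ Set.Icc c2 (c2 + 1) ⊆ closure (cellA c1 c2 c) := by
  rintro ⟨p1, p2⟩ ⟨⟨hp1a, hp1b⟩, ⟨hp2a, hp2b⟩⟩
  rw [Metric.mem_closure_iff]
  intro ε hε
  set δ := min ε 1 / 4 with hδdef
  have hδ0 : 0 < δ := by
    apply div_pos _ (by norm_num)
    exact lt_min hε (by norm_num)
  have hδε : 4 * δ ≤ ε := by
    have : min ε 1 ≤ ε := min_le_left _ _
    simp only [hδdef]; linarith
  have hδ1 : 4 * δ ≤ 1 := by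
    have : min ε 1 ≤ 1 := min_le_right _ _
    simp only [hδdef]; linarith
  have hlohi : max c1 (p1 - δ) < min (c1 + 1) (p1 + δ) := by
    apply max_lt <;> apply lt_min <;> linarith
  cases c
  · -- red
    obtain ⟨x, hxI, hxf⟩ := magicF_dense_gt hlohi (show 1 - δ < 1 by linarith)
    set y := min (max p2 (c2 + δ)) (c2 + 1 - 2*δ) with hy
    have hyP : y ∈ cellFib c2 PColor.red x := by
      constructor
      · apply lt_min
        · exact lt_of_lt_of_le (by linarith) (le_max_right _ _)
        · linarith
      · have : y ≤ c2 + 1 - 2*δ := min_le_right _ _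
        linarith
    have hyd : |y - p2| ≤ 2*δ := by
      rw [abs_le]
      constructor
      · -- y ≥ p2 - 2δ
        have h1 : min p2 (c2 + 1 - 2*δ) ≤ y := by
          apply min_le_min_right
          exact le_max_left _ _
        have h2 : p2 - 2*δ ≤ min p2 (c2 + 1 - 2*δ) := by
          apply le_min <;> linarith
        linarith
      · -- y ≤ p2 + δ  hence ≤ p2 + 2δ
        have h1 : y ≤ max p2 (c2 + δ) := min_le_left _ _
        have h2 : max p2 (c2 + δ) ≤ p2 + δ := by
          apply max_le <;> linarith
        linarith
    refine ⟨(x, y), ⟨⟨?_, ?_⟩, hyP⟩, ?_⟩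
    · exact lt_of_le_of_lt (le_max_left _ _) hxI.1
    · exact lt_of_lt_of_le hxI.2 (min_le_left _ _)
    · rw [Prod.dist_eq, Real.dist_eq, Real.dist_eq]
      have hb1 : |p1 - x| < δ := by
        rw [abs_lt]
        constructor
        · have := lt_of_lt_of_le hxI.2 (min_le_right (c1+1) (p1 + δ)); linarith
        · have := lt_of_le_of_lt (le_max_right c1 (p1 - δ)) hxI.1; linarith
      have hb2 : |p2 - y| ≤ 2*δ := by rw [abs_sub_comm]; exact hyd
      apply max_lt <;> simp only <;> linarith [abs_nonneg (p1 - x)]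
  · -- blue
    obtain ⟨x, hxI, hxf⟩ := magicF_dense_lt hlohi hδ0
    set y := min (max p2 (c2 + δ)) (c2 + 1 - δ) with hy
    have hyP : y ∈ cellFib c2 PColor.blue x := by
      constructor
      · apply le_min
        · exact le_trans (by linarith) (le_max_right _ _)
        · linarith
      · have : y ≤ c2 + 1 - δ := min_le_right _ _
        linarith
    have hyd : |y - p2| ≤ 2*δ := by
      rw [abs_le]
      constructor
      · have h1 : min p2 (c2 + 1 - δ) ≤ y := by
          apply min_le_min_right
          exact le_max_left _ _
        have h2 : p2 - 2*δ ≤ min p2 (c2 + 1 - δ) := by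
          apply le_min <;> linarith
        linarith
      · have h1 : y ≤ max p2 (c2 + δ) := min_le_left _ _
        have h2 : max p2 (c2 + δ) ≤ p2 + δ := by
          apply max_le <;> linarith
        linarith
    refine ⟨(x, y), ⟨⟨?_, ?_⟩, hyP⟩, ?_⟩
    · exact lt_of_le_of_lt (le_max_left _ _) hxI.1
    · exact lt_of_lt_of_le hxI.2 (min_le_left _ _)
    · rw [Prod.dist_eq, Real.dist_eq, Real.dist_eq]
      have hb1 : |p1 - x| < δ := by
        rw [abs_lt]
        constructor
        · have := lt_of_lt_of_le hxI.2 (min_le_right (c1+1) (p1 + δ)); linarith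
        · have := lt_of_le_of_lt (le_max_right c1 (p1 - δ)) hxI.1; linarith
      have hb2 : |p2 - y| ≤ 2*δ := by rw [abs_sub_comm]; exact hyd
      apply max_lt <;> simp only <;> linarith [abs_nonneg (p1 - x)]

end CellSets
namespace ColoredGrid
open PColor

variable {G : ColoredGrid}

/-- real x-coordinate of the lower-left corner of cell `s` -/
def ccx (s : Fin G.m × Fin G.n) : ℝ := (s.1.1 : ℝ)
def ccy (s : Fin G.m × Fin G.n) : ℝ := (s.2.1 : ℝ)

lemma cellSet_eq_prod (s : Fin G.m × Fin G.n) :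
    G.cellSet s = Set.Icc (ccx s) (ccx s + 1) ×ˢ Set.Icc (ccy s) (ccy s + 1) := by
  unfold cellSet ccx ccy
  ext p
  simp only [Set.mem_Icc, Set.mem_prod, Prod.le_def]
  tauto

def openCell (s : Fin G.m × Fin G.n) : Set (ℝ × ℝ) :=
  Set.Ioo (ccx s) (ccx s + 1) ×ˢ Set.Ioo (ccy s) (ccy s + 1)

lemma isClosed_cellSet (s : Fin G.m × Fin G.n) : IsClosed (G.cellSet s) := by
  rw [cellSet_eq_prod]
  exact isClosed_Icc.prod isClosed_Icc

lemma openCell_subset (s : Fin G.m × Fin G.n) : openCell s ⊆ G.cellSet s := by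
  rw [cellSet_eq_prod]
  exact Set.prod_mono Set.Ioo_subset_Icc_self Set.Ioo_subset_Icc_self

lemma closure_openCell (s : Fin G.m × Fin G.n) :
    closure (openCell s) = G.cellSet s := by
  rw [cellSet_eq_prod]
  unfold openCell
  rw [closure_prod_eq, closure_Ioo (by norm_num : ccx s ≠ ccx s + 1),
    closure_Ioo (by norm_num : ccy s ≠ ccy s + 1)]

lemma interior_cellSet (s : Fin G.m × Fin G.n) :
    interior (G.cellSet s) = openCell s := by
  rw [cellSet_eq_prod]
  unfold openCell
  rw [interior_prod_eq, interior_Icc, interior_Icc]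

lemma openCell_nonempty (s : Fin G.m × Fin G.n) : (openCell s).Nonempty :=
  ⟨(ccx s + 1/2, ccy s + 1/2), ⟨by norm_num, by norm_num⟩, ⟨by norm_num, by norm_num⟩⟩

lemma cellSet_nonempty (s : Fin G.m × Fin G.n) : (G.cellSet s).Nonempty :=
  ⟨_, openCell_subset s (openCell_nonempty s).some_mem⟩

/-- distinct cells: the open cell misses the other closed cell -/
lemma openCell_inter_cellSet {s t : Fin G.m × Fin G.n} (hst : s ≠ t) :
    openCell s ∩ G.cellSet t = ∅ := by
  rw [cellSet_eq_prod]
  ext p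
  simp only [Set.mem_inter_iff, Set.mem_empty_iff_false, iff_false, not_and]
  rintro ⟨⟨h1a, h1b⟩, h2a, h2b⟩ ⟨⟨h3a, h3b⟩, h4a, h4b⟩
  apply hst
  unfold ccx ccy at *
  have e1 : s.1 = t.1 := by
    apply Fin.ext
    have k1 : (t.1.1 : ℝ) < (s.1.1 : ℝ) + 1 := lt_of_le_of_lt h3a h1b
    have k2 : (s.1.1 : ℝ) < (t.1.1 : ℝ) + 1 := lt_of_lt_of_le h1a (by linarith : p.1 ≤ (t.1.1 : ℝ) + 1)
    have k1' : t.1.1 < s.1.1 + 1 := by exact_mod_cast k1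
    have k2' : s.1.1 < t.1.1 + 1 := by exact_mod_cast k2
    omega
  have e2 : s.2 = t.2 := by
    apply Fin.ext
    have k1 : (t.2.1 : ℝ) < (s.2.1 : ℝ) + 1 := lt_of_le_of_lt h4a h2b
    have k2 : (s.2.1 : ℝ) < (t.2.1 : ℝ) + 1 := lt_of_lt_of_le h2a (by linarith : p.2 ≤ (t.2.1 : ℝ) + 1)
    have k1' : t.2.1 < s.2.1 + 1 := by exact_mod_cast k1
    have k2' : s.2.1 < t.2.1 + 1 := by exact_mod_cast k2
    omega
  exact Prod.ext e1 e2

/-- if two distinct non-adjacent cells intersect, they are diagonal and the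
intersection point also lies in both off-diagonal cells, which are adjacent to both. -/
lemma cell_inter_cases {s t : Fin G.m × Fin G.n} (hst : s ≠ t) (hadj : ¬ G.adjCell s t)
    {p : ℝ × ℝ} (hps : p ∈ G.cellSet s) (hpt : p ∈ G.cellSet t) :
    p ∈ G.cellSet (s.1, t.2) ∧ G.adjCell s (s.1, t.2) ∧ G.adjCell (s.1, t.2) t := by
  rw [cellSet_eq_prod] at hps hpt ⊢
  obtain ⟨⟨h1a, h1b⟩, h2a, h2b⟩ := hps
  obtain ⟨⟨h3a, h3b⟩, h4a, h4b⟩ := hpt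
  unfold ccx ccy at *
  have k1 : s.1.1 ≤ t.1.1 + 1 := by
    have : (s.1.1 : ℝ) ≤ (t.1.1 : ℝ) + 1 := le_trans h1a h3b
    exact_mod_cast this
  have k2 : t.1.1 ≤ s.1.1 + 1 := by
    have : (t.1.1 : ℝ) ≤ (s.1.1 : ℝ) + 1 := le_trans h3a h1b
    exact_mod_cast this
  have k3 : s.2.1 ≤ t.2.1 + 1 := by
    have : (s.2.1 : ℝ) ≤ (t.2.1 : ℝ) + 1 := le_trans h2a h4b
    exact_mod_cast this
  have k4 : t.2.1 ≤ s.2.1 + 1 := by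
    have : (t.2.1 : ℝ) ≤ (s.2.1 : ℝ) + 1 := le_trans h4a h2b
    exact_mod_cast this
  have hd1 : s.1 ≠ t.1 ∨ s.2 ≠ t.2 := by
    by_contra hcon
    push_neg at hcon
    exact hst (Prod.ext hcon.1 hcon.2)
  have hx : s.1.1 + 1 = t.1.1 ∨ t.1.1 + 1 = s.1.1 := by
    rcases Nat.lt_or_ge s.1.1 t.1.1 with h | h
    · left; omega
    · rcases Nat.lt_or_ge t.1.1 s.1.1 with h' | h'
      · right; omega
      · -- s.1.1 = t.1.1
        exfalso
        have e1 : s.1 = t.1 := Fin.ext (by omega)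
        have hy : s.2.1 + 1 = t.2.1 ∨ t.2.1 + 1 = s.2.1 := by
          rcases hd1 with h'' | h''
          · exact absurd e1 h''
          · have : s.2.1 ≠ t.2.1 := fun hh => h'' (Fin.ext hh)
            omega
        exact hadj (Or.inl ⟨e1, hy⟩)
  have hy : s.2.1 + 1 = t.2.1 ∨ t.2.1 + 1 = s.2.1 := by
    rcases Nat.lt_or_ge s.2.1 t.2.1 with h | h
    · left; omega
    · rcases Nat.lt_or_ge t.2.1 s.2.1 with h' | h'
      · right; omega
      · exfalso
        have e2 : s.2 = t.2 := Fin.ext (by omega)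
        exact hadj (Or.inr ⟨e2, hx⟩)
  refine ⟨⟨⟨h1a, h1b⟩, h4a, h4b⟩, Or.inl ⟨rfl, hy⟩, Or.inr ⟨rfl, hx⟩⟩

end ColoredGrid
namespace PColor

/-- the other color -/
def othc : PColor → PColor
  | red => blue
  | blue => red

lemma othc_ne (c : PColor) : othc c ≠ c := by cases c <;> simp [othc]

lemma eq_or_eq (c : PColor) : c = red ∨ c = blue := by cases c <;> simp

end PColor

namespace ColoredGrid
open PColor

variable {G : ColoredGrid}

lemma chi_cases (hfull : ∀ s, (G.chi s).Nonempty) (s : Fin G.m × Fin G.n) :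
    G.chi s = {red} ∨ G.chi s = {blue} ∨ G.chi s = {red, blue} := by
  by_cases hr : red ∈ G.chi s <;> by_cases hb : blue ∈ G.chi s
  · right; right
    ext c; cases c <;> simp [hr, hb]
  · left
    ext c; cases c <;> simp [hr, hb]
  · right; left
    ext c; cases c <;> simp [hr, hb]
  · exfalso
    obtain ⟨c, hc⟩ := hfull s
    cases c
    · exact hr hc
    · exact hb hc

lemma not_adm_mono (hfull : ∀ s, (G.chi s).Nonempty) {s : Fin G.m × Fin G.n} {c : PColor}
    (h : c ∉ G.chi s) : G.chi s = {othc c} := by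
  cases c
  · rcases chi_cases hfull s with h1 | h1 | h1
    · rw [h1] at h; simp at h
    · exact h1
    · rw [h1] at h; simp at h
  · rcases chi_cases hfull s with h1 | h1 | h1
    · exact h1
    · rw [h1] at h; simp at h
    · rw [h1] at h; simp at h

lemma mono_part_full (pa : G.Painting) {s : Fin G.m × Fin G.n} {c : PColor}
    (h : G.chi s = {c}) : pa.part s c = G.cellSet s := by
  have hne : (G.chi s).Nonempty := by rw [h]; exact ⟨c, Finset.mem_singleton_self c⟩
  have hcov := pa.part_covers s hne
  have hemp : pa.part s (othc c) = ∅ := by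
    apply pa.part_empty
    rw [h, Finset.mem_singleton]
    exact othc_ne c
  cases c
  · rw [show othc red = blue from rfl] at hemp
    rw [hemp, Set.union_empty] at hcov
    exact hcov
  · rw [show othc blue = red from rfl] at hemp
    rw [hemp, Set.empty_union] at hcov
    exact hcov

lemma colors_disj' (pa : G.Painting) (c : PColor) :
    Disjoint (⋃ s, pa.part s c) (⋃ s, pa.part s (othc c)) := by
  cases c
  · exact pa.colors_disjoint
  · exact pa.colors_disjoint.symm

/-- a mono cell of one color cannot touch a mono cell of the other color -/
lemma mono_mono_disjoint (pa : G.Painting) {s t : Fin G.m × Fin G.n} {c : PColor}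
    (hs : G.chi s = {c}) (ht : G.chi t = {othc c}) {p : ℝ × ℝ}
    (hps : p ∈ G.cellSet s) (hpt : p ∈ G.cellSet t) : False := by
  have h1 : p ∈ ⋃ w, pa.part w c := Set.mem_iUnion.mpr ⟨s, by rw [mono_part_full pa hs]; exact hps⟩
  have h2 : p ∈ ⋃ w, pa.part w (othc c) :=
    Set.mem_iUnion.mpr ⟨t, by rw [mono_part_full pa ht]; exact hpt⟩
  exact Set.disjoint_left.mp (colors_disj' pa c) h1 h2

/-- some cell admits color c -/
lemma exists_adm (pa : G.Painting) (c : PColor) : ∃ s, c ∈ G.chi s := by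
  have h1 := (pa.colors_connected c).1.nonempty
  have h2 : (closure (⋃ s, pa.part s c)).Nonempty := h1.mono interior_subset
  rw [closure_nonempty_iff] at h2
  obtain ⟨x, hx⟩ := h2
  rw [Set.mem_iUnion] at hx
  obtain ⟨s, hs⟩ := hx
  refine ⟨s, ?_⟩
  by_contra hc
  rw [pa.part_empty s c hc] at hs
  exact hs

/-- Key combinatorial consequence of the existence of a painting:
the cells admitting color `c` are connected under edge-adjacency. -/
lemma adm_connected (pa : G.Painting) (hfull : ∀ s, (G.chi s).Nonempty) (c : PColor)
    {s t : Fin G.m × Fin G.n} (hs : c ∈ G.chi s) (ht : c ∈ G.chi t) :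
    Relation.ReflTransGen (fun a b => c ∈ G.chi a ∧ c ∈ G.chi b ∧ G.adjCell a b) s t := by
  classical
  set R := fun a b => c ∈ G.chi a ∧ c ∈ G.chi b ∧ G.adjCell a b with hR
  by_contra hQt
  set P : Set (Fin G.m × Fin G.n) := {w | c ∈ G.chi w ∧ Relation.ReflTransGen R s w} with hP
  set Q : Set (Fin G.m × Fin G.n) := {w | c ∈ G.chi w ∧ ¬ Relation.ReflTransGen R s w} with hQ
  have hsP : s ∈ P := ⟨hs, Relation.ReflTransGen.refl⟩
  have htQ : t ∈ Q := ⟨ht, hQt⟩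
  set KP := ⋃ w ∈ P, G.cellSet w with hKP
  set KQ := ⋃ w ∈ Q, G.cellSet w with hKQ
  have hKPc : IsClosed KP := (Set.toFinite P).isClosed_biUnion (fun w _ => isClosed_cellSet w)
  have hKQc : IsClosed KQ := (Set.toFinite Q).isClosed_biUnion (fun w _ => isClosed_cellSet w)
  set U := ⋃ w, pa.part w c with hU
  have hUsub : U ⊆ KP ∪ KQ := by
    intro x hx
    rw [Set.mem_iUnion] at hx
    obtain ⟨w, hw⟩ := hx
    have hcw : c ∈ G.chi w := by
      by_contra hc
      rw [pa.part_empty w c hc] at hw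
      exact hw
    have hxw : x ∈ G.cellSet w := pa.part_subset w c hw
    by_cases hrtg : Relation.ReflTransGen R s w
    · exact Or.inl (Set.mem_biUnion (show w ∈ P from ⟨hcw, hrtg⟩) hxw)
    · exact Or.inr (Set.mem_biUnion (show w ∈ Q from ⟨hcw, hrtg⟩) hxw)
  have hclU : closure U ⊆ KP ∪ KQ := closure_minimal hUsub (hKPc.union hKQc)
  set V := interior (closure U) with hV
  have hVconn : IsConnected V := (pa.colors_connected c).1
  have hVcl : U ⊆ closure V := (pa.colors_connected c).2
  -- corner contradiction
  have corner : ∀ w ∈ P, ∀ w' ∈ Q, ∀ p : ℝ × ℝ,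
      p ∈ G.cellSet w → p ∈ G.cellSet w' → p ∈ U → False := by
    rintro w ⟨hcw, hrw⟩ w' ⟨hcw', hrw'⟩ p hpw hpw' hpU
    have hww' : w ≠ w' := by rintro rfl; exact hrw' hrw
    have hnadj : ¬ G.adjCell w w' := fun hadj => hrw' (hrw.tail ⟨hcw, hcw', hadj⟩)
    obtain ⟨hpu, hadj1, hadj2⟩ := cell_inter_cases hww' hnadj hpw hpw'
    set u : Fin G.m × Fin G.n := (w.1, w'.2) with hu
    have hcu : c ∉ G.chi u := by
      intro hcu
      exact hrw' ((hrw.tail ⟨hcw, hcu, hadj1⟩).tail ⟨hcu, hcw', hadj2⟩)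
    have hmono : G.chi u = {othc c} := not_adm_mono hfull hcu
    have hpUoth : p ∈ ⋃ v, pa.part v (othc c) :=
      Set.mem_iUnion.mpr ⟨u, by rw [mono_part_full pa hmono]; exact hpu⟩
    exact Set.disjoint_left.mp (colors_disj' pa c) hpU hpUoth
  -- non-admissible cells don't meet the closure
  have hcellfree : ∀ u : Fin G.m × Fin G.n, c ∉ G.chi u → openCell u ∩ (KP ∪ KQ) = ∅ := by
    intro u hcu
    ext z
    simp only [Set.mem_inter_iff, Set.mem_empty_iff_false, iff_false, not_and]
    intro hz1 hz2
    rcases hz2 with hz2 | hz2 <;>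
    · rw [Set.mem_iUnion₂] at hz2
      obtain ⟨w, hwPQ, hzw⟩ := hz2
      have : u ≠ w := by rintro rfl; exact hcu hwPQ.1
      have := openCell_inter_cellSet this (G := G)
      rw [Set.eq_empty_iff_forall_notMem] at this
      exact this z ⟨hz1, hzw⟩
  -- V avoids KP ∩ KQ
  have hVPQ : ∀ p ∈ V, ¬(p ∈ KP ∧ p ∈ KQ) := by
    rintro p hpV ⟨hpP, hpQ⟩
    rw [Set.mem_iUnion₂] at hpP hpQ
    obtain ⟨w, hwP, hpw⟩ := hpP
    obtain ⟨w', hw'Q, hpw'⟩ := hpQ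
    have hww' : w ≠ w' := by
      rintro rfl
      exact hw'Q.2 hwP.2
    have hnadj : ¬ G.adjCell w w' := fun hadj => hw'Q.2 (hwP.2.tail ⟨hwP.1, hw'Q.1, hadj⟩)
    obtain ⟨hpu, hadj1, hadj2⟩ := cell_inter_cases hww' hnadj hpw hpw'
    set u : Fin G.m × Fin G.n := (w.1, w'.2) with hu
    have hcu : c ∉ G.chi u := by
      intro hcu
      exact hw'Q.2 ((hwP.2.tail ⟨hwP.1, hcu, hadj1⟩).tail ⟨hcu, hw'Q.1, hadj2⟩)
    -- p is in the closure of the open cell of u, whose points are not in closure U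
    have hpclu : p ∈ closure (openCell u) := by rw [closure_openCell]; exact hpu
    have hVopen : IsOpen V := isOpen_interior
    obtain ⟨z, hzV, hzu⟩ : ∃ z, z ∈ V ∧ z ∈ openCell u := by
      have := mem_closure_iff.mp hpclu V hVopen hpV
      obtain ⟨z, hz1, hz2⟩ := this
      exact ⟨z, hz1, hz2⟩
    have hzKPQ : z ∈ KP ∪ KQ := hclU (interior_subset hzV)
    have := hcellfree u hcu
    rw [Set.eq_empty_iff_forall_notMem] at this
    exact this z ⟨hzu, hzKPQ⟩
  -- V is inside KP or inside KQ
  have hVor : V ⊆ KP ∨ V ⊆ KQ := by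
    by_contra hcon
    push_neg at hcon
    obtain ⟨h1, h2⟩ := hcon
    obtain ⟨p1, hp1V, hp1⟩ := Set.not_subset.mp h1
    obtain ⟨p2, hp2V, hp2⟩ := Set.not_subset.mp h2
    have hcover : V ⊆ KPᶜ ∪ KQᶜ := by
      intro p hp
      by_cases hP : p ∈ KP
      · right
        intro hQ
        exact hVPQ p hp ⟨hP, hQ⟩
      · left; exact hP
    have := hVconn.isPreconnected KPᶜ KQᶜ hKPc.isOpen_compl hKQc.isOpen_compl hcover
      ⟨p1, hp1V, hp1⟩ ⟨p2, hp2V, hp2⟩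
    obtain ⟨z, hzV, hz1, hz2⟩ := this
    have : z ∈ KP ∪ KQ := hclU (interior_subset hzV)
    rcases this with h | h
    · exact hz1 h
    · exact hz2 h
  rcases hVor with hVP | hVQ
  · -- U ⊆ KP ; take a point of part t c
    have hUKP : U ⊆ KP := fun x hx => by
      have := hVcl hx
      exact (closure_minimal hVP hKPc) this
    obtain ⟨x, hx⟩ := pa.part_nonempty t c ht
    have hxU : x ∈ U := Set.mem_iUnion.mpr ⟨t, hx⟩
    have hxKP := hUKP hxU
    rw [Set.mem_iUnion₂] at hxKP
    obtain ⟨w, hwP, hxw⟩ := hxKP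
    exact corner w hwP t htQ x hxw (pa.part_subset t c hx) hxU
  · -- U ⊆ KQ ; take a point of part s c
    have hUKQ : U ⊆ KQ := fun x hx => by
      have := hVcl hx
      exact (closure_minimal hVQ hKQc) this
    obtain ⟨x, hx⟩ := pa.part_nonempty s c hs
    have hxU : x ∈ U := Set.mem_iUnion.mpr ⟨s, hx⟩
    have hxKQ := hUKQ hxU
    rw [Set.mem_iUnion₂] at hxKQ
    obtain ⟨w', hw'Q, hxw'⟩ := hxKQ
    exact corner s hsP w' hw'Q x (pa.part_subset s c hx) hxw' hxU

end ColoredGrid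
namespace ColoredGrid
open PColor

variable {G : ColoredGrid}

/-- union of all mono-red closed cells -/
def MRset (G : ColoredGrid) : Set (ℝ × ℝ) :=
  ⋃ w ∈ {w : Fin G.m × Fin G.n | G.chi w = {red}}, G.cellSet w

lemma mem_MRset {p : ℝ × ℝ} : p ∈ MRset G ↔ ∃ w, G.chi w = {red} ∧ p ∈ G.cellSet w := by
  unfold MRset
  rw [Set.mem_iUnion₂]
  constructor
  · rintro ⟨w, h1, h2⟩; exact ⟨w, h1, h2⟩
  · rintro ⟨w, h1, h2⟩; exact ⟨w, h1, h2⟩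

/-- boundary points of cell `s` assigned to color `c` -/
def bdryPart (G : ColoredGrid) (s : Fin G.m × Fin G.n) (c : PColor) : Set (ℝ × ℝ) :=
  {p | p ∈ G.cellSet s ∧ p ∉ openCell s ∧ (p ∈ MRset G ↔ c = red)}

/-- the parts of the new 2-painting -/
noncomputable def part2 (G : ColoredGrid) (s : Fin G.m × Fin G.n) (c : PColor) : Set (ℝ × ℝ) :=
  if G.chi s = {c} then G.cellSet s
  else if G.chi s = {red, blue} then cellA (ccx s) (ccy s) c ∪ bdryPart G s c
  else ∅

lemma pair_ne_singleton (c : PColor) : ({red, blue} : Finset PColor) ≠ {c} := by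
  cases c <;> decide

lemma part2_mono {s : Fin G.m × Fin G.n} {c : PColor} (h : G.chi s = {c}) :
    part2 G s c = G.cellSet s := by
  unfold part2; rw [if_pos h]

lemma part2_mono_other {s : Fin G.m × Fin G.n} {c : PColor} (h : G.chi s = {othc c}) :
    part2 G s c = ∅ := by
  unfold part2
  rw [if_neg, if_neg]
  · rw [h]; exact fun hc => pair_ne_singleton (othc c) hc.symm
  · rw [h]
    intro hc
    exact othc_ne c (Finset.singleton_injective hc)

lemma part2_purple {s : Fin G.m × Fin G.n} (h : G.chi s = {red, blue}) (c : PColor) :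
    part2 G s c = cellA (ccx s) (ccy s) c ∪ bdryPart G s c := by
  unfold part2
  rw [if_neg, if_pos h]
  rw [h]
  exact pair_ne_singleton c

lemma cellA_sub_openCell (s : Fin G.m × Fin G.n) (c : PColor) :
    cellA (ccx s) (ccy s) c ⊆ openCell s :=
  cellA_subset_open (ccx s) (ccy s) c

lemma cellSet_sub_closure_cellA (s : Fin G.m × Fin G.n) (c : PColor) :
    G.cellSet s ⊆ closure (cellA (ccx s) (ccy s) c) := by
  rw [cellSet_eq_prod]
  exact cellA_dense (ccx s) (ccy s) c

lemma part2_subset (s : Fin G.m × Fin G.n) (c : PColor) : part2 G s c ⊆ G.cellSet s := by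
  unfold part2
  split
  · exact Set.Subset.rfl
  · split
    · rintro p (hp | hp)
      · exact openCell_subset s (cellA_sub_openCell s c hp)
      · exact hp.1
    · exact Set.empty_subset _

lemma convex_cellSet (s : Fin G.m × Fin G.n) : Convex ℝ (G.cellSet s) := by
  rw [cellSet_eq_prod]
  exact (convex_Icc _ _).prod (convex_Icc _ _)

lemma adm_cases (hfull : ∀ s, (G.chi s).Nonempty) {s : Fin G.m × Fin G.n} {c : PColor}
    (h : c ∈ G.chi s) : G.chi s = {c} ∨ G.chi s = {red, blue} := by
  rcases chi_cases hfull s with h1 | h1 | h1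
  · cases c
    · exact Or.inl h1
    · rw [h1] at h; simp at h
  · cases c
    · rw [h1] at h; simp at h
    · exact Or.inl h1
  · exact Or.inr h1

lemma part2_preconnected (hfull : ∀ s, (G.chi s).Nonempty) (s : Fin G.m × Fin G.n) (c : PColor) :
    IsPreconnected (part2 G s c) := by
  rcases chi_cases hfull s with h1 | h1 | h1
  · cases c
    · rw [part2_mono h1]; exact (convex_cellSet s).isPreconnected
    · rw [part2_mono_other (c := blue) h1]; exact isPreconnected_empty
  · cases c
    · rw [part2_mono_other (c := red) h1]; exact isPreconnected_empty
    · rw [part2_mono h1]; exact (convex_cellSet s).isPreconnected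
  · rw [part2_purple h1]
    apply (cellA_preconnected (ccx s) (ccy s) c).subset_closure Set.subset_union_left
    rintro p (hp | hp)
    · exact subset_closure hp
    · exact cellSet_sub_closure_cellA s c hp.1

/-- admissible region for color c -/
def Cadm (G : ColoredGrid) (c : PColor) : Set (ℝ × ℝ) :=
  ⋃ w ∈ {w : Fin G.m × Fin G.n | c ∈ G.chi w}, G.cellSet w

lemma Cadm_closed (c : PColor) : IsClosed (Cadm G c) :=
  (Set.toFinite _).isClosed_biUnion (fun w _ => isClosed_cellSet w)

lemma U2_sub_Cadm (c : PColor) : (⋃ s, part2 G s c) ⊆ Cadm G c := by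
  intro p hp
  rw [Set.mem_iUnion] at hp
  obtain ⟨s, hs⟩ := hp
  have hcs : c ∈ G.chi s := by
    by_contra hc
    unfold part2 at hs
    rw [if_neg, if_neg] at hs
    · exact hs
    · intro h; rw [h] at hc; cases c <;> simp at hc
    · intro h; rw [h] at hc; simp at hc
  exact Set.mem_biUnion hcs (part2_subset s c hs)

lemma closure_U2 (hfull : ∀ s, (G.chi s).Nonempty) (c : PColor) :
    closure (⋃ s, part2 G s c) = Cadm G c := by
  apply Set.Subset.antisymm
  · exact closure_minimal (U2_sub_Cadm c) (Cadm_closed c)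
  · intro p hp
    unfold Cadm at hp
    rw [Set.mem_iUnion₂] at hp
    obtain ⟨s, hcs, hps⟩ := hp
    rcases adm_cases hfull hcs with h1 | h1
    · apply subset_closure
      rw [Set.mem_iUnion]
      exact ⟨s, by rw [part2_mono h1]; exact hps⟩
    · have h2 : p ∈ closure (cellA (ccx s) (ccy s) c) := cellSet_sub_closure_cellA s c hps
      apply closure_mono _ h2
      intro z hz
      rw [Set.mem_iUnion]
      exact ⟨s, by rw [part2_purple h1]; exact Or.inl hz⟩

section Bridges

/-- pairs of adjacent (or equal) admissible cells -/
def brT (G : ColoredGrid) (c : PColor) : Set ((Fin G.m × Fin G.n) × (Fin G.m × Fin G.n)) :=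
  {q | c ∈ G.chi q.1 ∧ c ∈ G.chi q.2 ∧ (q.1 = q.2 ∨ G.adjCell q.1 q.2)}

/-- the open bridge rectangle of a pair of cells -/
def brR (G : ColoredGrid) (q : (Fin G.m × Fin G.n) × (Fin G.m × Fin G.n)) : Set (ℝ × ℝ) :=
  interior (G.cellSet q.1 ∪ G.cellSet q.2)

lemma union_convex {s t : Fin G.m × Fin G.n} (h : s = t ∨ G.adjCell s t) :
    Convex ℝ (G.cellSet s ∪ G.cellSet t) := by
  rcases h with rfl | h
  · rw [Set.union_self]; exact convex_cellSet s
  · rcases h with ⟨h1, h2 | h2⟩ | ⟨h1, h2 | h2⟩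
    · have hx : ccx s = ccx t := by unfold ccx; rw [h1]
      have hy : ccy t = ccy s + 1 := by unfold ccy; rw [← h2]; push_cast; ring
      rw [cellSet_eq_prod, cellSet_eq_prod, ← hx, hy, ← Set.prod_union,
        Set.Icc_union_Icc_eq_Icc (by linarith) (by linarith)]
      exact (convex_Icc _ _).prod (convex_Icc _ _)
    · have hx : ccx s = ccx t := by unfold ccx; rw [h1]
      have hy : ccy s = ccy t + 1 := by unfold ccy; rw [← h2]; push_cast; ring
      rw [cellSet_eq_prod, cellSet_eq_prod, ← hx, hy, Set.union_comm, ← Set.prod_union,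
        Set.Icc_union_Icc_eq_Icc (by linarith) (by linarith)]
      exact (convex_Icc _ _).prod (convex_Icc _ _)
    · have hy : ccy s = ccy t := by unfold ccy; rw [h1]
      have hx : ccx t = ccx s + 1 := by unfold ccx; rw [← h2]; push_cast; ring
      rw [cellSet_eq_prod, cellSet_eq_prod, ← hy, hx, ← Set.union_prod,
        Set.Icc_union_Icc_eq_Icc (by linarith) (by linarith)]
      exact (convex_Icc _ _).prod (convex_Icc _ _)
    · have hy : ccy s = ccy t := by unfold ccy; rw [h1]
      have hx : ccx s = ccx t + 1 := by unfold ccx; rw [← h2]; push_cast; ring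
      rw [cellSet_eq_prod, cellSet_eq_prod, ← hy, hx, Set.union_comm, ← Set.union_prod,
        Set.Icc_union_Icc_eq_Icc (by linarith) (by linarith)]
      exact (convex_Icc _ _).prod (convex_Icc _ _)

lemma openCell_sub_brR_left (q : (Fin G.m × Fin G.n) × (Fin G.m × Fin G.n)) :
    openCell q.1 ⊆ brR G q := by
  rw [← interior_cellSet]
  exact interior_mono Set.subset_union_left

lemma openCell_sub_brR_right (q : (Fin G.m × Fin G.n) × (Fin G.m × Fin G.n)) :
    openCell q.2 ⊆ brR G q := by
  rw [← interior_cellSet]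
  exact interior_mono Set.subset_union_right

lemma brR_preconnected {c : PColor} {q : (Fin G.m × Fin G.n) × (Fin G.m × Fin G.n)}
    (hq : q ∈ brT G c) : IsPreconnected (brR G q) :=
  ((union_convex hq.2.2).interior).isPreconnected

lemma brN_preconnected (pa : G.Painting) (hfull : ∀ s, (G.chi s).Nonempty) (c : PColor) :
    IsPreconnected (⋃ q ∈ brT G c, brR G q) := by
  apply IsPreconnected.biUnion_of_reflTransGen (fun q hq => brR_preconnected hq)
  set R' := fun i j : (Fin G.m × Fin G.n) × (Fin G.m × Fin G.n) =>
    (brR G i ∩ brR G j).Nonempty ∧ i ∈ brT G c with hR'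
  have diagT : ∀ a : Fin G.m × Fin G.n, c ∈ G.chi a → (a, a) ∈ brT G c :=
    fun a ha => ⟨ha, ha, Or.inl rfl⟩
  have chain_diag : ∀ a b : Fin G.m × Fin G.n,
      Relation.ReflTransGen (fun x y => c ∈ G.chi x ∧ c ∈ G.chi y ∧ G.adjCell x y) a b →
      Relation.ReflTransGen R' (a, a) (b, b) := by
    intro a b hab
    induction hab with
    | refl => exact Relation.ReflTransGen.refl
    | @tail x y hax hxy ih =>
      have st1 : R' (x, x) (x, y) := by
        refine ⟨⟨(openCell_nonempty x).some, ?_, ?_⟩, diagT x hxy.1⟩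
        · exact openCell_sub_brR_left (x, x) (openCell_nonempty x).some_mem
        · exact openCell_sub_brR_left (x, y) (openCell_nonempty x).some_mem
      have st2 : R' (x, y) (y, y) := by
        refine ⟨⟨(openCell_nonempty y).some, ?_, ?_⟩, ⟨hxy.1, hxy.2.1, Or.inr hxy.2.2⟩⟩
        · exact openCell_sub_brR_right (x, y) (openCell_nonempty y).some_mem
        · exact openCell_sub_brR_left (y, y) (openCell_nonempty y).some_mem
      exact (ih.tail st1).tail st2
  intro q hq q' hq'
  have step1 : Relation.ReflTransGen R' q (q.1, q.1) := by
    apply Relation.ReflTransGen.single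
    refine ⟨⟨(openCell_nonempty q.1).some, ?_, ?_⟩, hq⟩
    · exact openCell_sub_brR_left q (openCell_nonempty q.1).some_mem
    · exact openCell_sub_brR_left (q.1, q.1) (openCell_nonempty q.1).some_mem
  have step3 : Relation.ReflTransGen R' (q'.1, q'.1) q' := by
    apply Relation.ReflTransGen.single
    refine ⟨⟨(openCell_nonempty q'.1).some, ?_, ?_⟩, diagT q'.1 hq'.1⟩
    · exact openCell_sub_brR_left (q'.1, q'.1) (openCell_nonempty q'.1).some_mem
    · exact openCell_sub_brR_left q' (openCell_nonempty q'.1).some_mem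
  exact (step1.trans (chain_diag q.1 q'.1 (adm_connected pa hfull c hq.1 hq'.1))).trans step3

lemma brN_sub_int_Cadm (c : PColor) : (⋃ q ∈ brT G c, brR G q) ⊆ interior (Cadm G c) := by
  intro p hp
  rw [Set.mem_iUnion₂] at hp
  obtain ⟨q, hq, hpq⟩ := hp
  apply interior_mono _ hpq
  apply Set.union_subset
  · exact Set.subset_biUnion_of_mem (show q.1 ∈ {w | c ∈ G.chi w} from hq.1)
  · exact Set.subset_biUnion_of_mem (show q.2 ∈ {w | c ∈ G.chi w} from hq.2.1)

lemma Cadm_sub_closure_brN (c : PColor) :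
    Cadm G c ⊆ closure (⋃ q ∈ brT G c, brR G q) := by
  intro p hp
  unfold Cadm at hp
  rw [Set.mem_iUnion₂] at hp
  obtain ⟨s, hcs, hps⟩ := hp
  have h1 : p ∈ closure (openCell s) := by rw [closure_openCell]; exact hps
  apply closure_mono _ h1
  intro z hz
  rw [Set.mem_iUnion₂]
  exact ⟨(s, s), ⟨hcs, hcs, Or.inl rfl⟩, openCell_sub_brR_left (s, s) hz⟩

lemma int_Cadm_connected (pa : G.Painting) (hfull : ∀ s, (G.chi s).Nonempty) (c : PColor) :
    IsConnected (interior (Cadm G c)) := by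
  constructor
  · obtain ⟨s0, hs0⟩ := exists_adm pa c
    have hsub : openCell s0 ⊆ interior (Cadm G c) := by
      rw [← interior_cellSet]
      exact interior_mono (Set.subset_biUnion_of_mem (show s0 ∈ {w | c ∈ G.chi w} from hs0))
    exact ⟨(openCell_nonempty s0).some, hsub (openCell_nonempty s0).some_mem⟩
  · apply (brN_preconnected pa hfull c).subset_closure (brN_sub_int_Cadm c)
    exact fun p hp => Cadm_sub_closure_brN c (interior_subset hp)

end Bridges

/-- the new painting is nicely connected in each color -/
lemma U2_nicelyConnected (pa : G.Painting) (hfull : ∀ s, (G.chi s).Nonempty) (c : PColor) :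
    NicelyConnected (⋃ s, part2 G s c) := by
  constructor
  · rw [closure_U2 hfull c]
    exact int_Cadm_connected pa hfull c
  · rw [closure_U2 hfull c]
    intro p hp
    have h1 : p ∈ Cadm G c := U2_sub_Cadm c hp
    have h2 := Cadm_sub_closure_brN c h1
    exact closure_mono (brN_sub_int_Cadm c) h2

end ColoredGrid
namespace ColoredGrid
open PColor

variable {G : ColoredGrid}

lemma part2_nonempty (hfull : ∀ s, (G.chi s).Nonempty) (s : Fin G.m × Fin G.n) (c : PColor)
    (hc : c ∈ G.chi s) : (part2 G s c).Nonempty := by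
  rcases adm_cases hfull hc with h1 | h1
  · rw [part2_mono h1]; exact cellSet_nonempty s
  · rw [part2_purple h1]
    exact (cellA_nonempty (ccx s) (ccy s) c).mono Set.subset_union_left

lemma part2_empty (hfull : ∀ s, (G.chi s).Nonempty) (s : Fin G.m × Fin G.n) (c : PColor)
    (hc : c ∉ G.chi s) : part2 G s c = ∅ :=
  part2_mono_other (not_adm_mono hfull hc)

lemma part2_covers (hfull : ∀ s, (G.chi s).Nonempty) (s : Fin G.m × Fin G.n) :
    part2 G s red ∪ part2 G s blue = G.cellSet s := by
  rcases chi_cases hfull s with h1 | h1 | h1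
  · rw [part2_mono h1, part2_mono_other (c := blue) h1, Set.union_empty]
  · rw [part2_mono h1, part2_mono_other (c := red) h1, Set.empty_union]
  · rw [part2_purple h1 red, part2_purple h1 blue]
    apply Set.Subset.antisymm
    · apply Set.union_subset
      · rw [← part2_purple h1]; exact part2_subset s red
      · rw [← part2_purple h1]; exact part2_subset s blue
    · intro p hp
      by_cases hop : p ∈ openCell s
      · have : p ∈ cellA (ccx s) (ccy s) red ∪ cellA (ccx s) (ccy s) blue := by
          rw [cellA_union]; exact hop
        rcases this with h | h
        · exact Or.inl (Or.inl h)
        · exact Or.inr (Or.inl h)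
      · by_cases hMR : p ∈ MRset G
        · exact Or.inl (Or.inr ⟨hp, hop, ⟨fun _ => rfl, fun _ => hMR⟩⟩)
        · refine Or.inr (Or.inr ⟨hp, hop, ⟨fun h => absurd h hMR, fun h => by cases h⟩⟩)

lemma part2_disjoint (pa : G.Painting) (hfull : ∀ s, (G.chi s).Nonempty) :
    Disjoint (⋃ s, part2 G s red) (⋃ s, part2 G s blue) := by
  rw [Set.disjoint_left]
  intro p hpr hpb
  rw [Set.mem_iUnion] at hpr hpb
  obtain ⟨s, hs⟩ := hpr
  obtain ⟨t, ht⟩ := hpb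
  have hps : p ∈ G.cellSet s := part2_subset s red hs
  have hpt : p ∈ G.cellSet t := part2_subset t blue ht
  rcases chi_cases hfull s with h1 | h1 | h1
  · -- s mono red
    rcases chi_cases hfull t with h2 | h2 | h2
    · rw [part2_mono_other (c := blue) h2] at ht; exact ht
    · exact mono_mono_disjoint pa (c := red) h1 h2 hps hpt
    · rw [part2_purple h2] at ht
      have hst : t ≠ s := by
        intro hc
        subst hc
        exact pair_ne_singleton red (h1.symm.trans h2).symm
      rcases ht with hA | hB
      · have := openCell_inter_cellSet (G := G) hst
        rw [Set.eq_empty_iff_forall_notMem] at this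
        exact this p ⟨cellA_sub_openCell t blue hA, hps⟩
      · have hpMR : p ∈ MRset G := mem_MRset.mpr ⟨s, h1, hps⟩
        have := hB.2.2.mp hpMR
        cases this
  · -- s mono blue : part2 s red = ∅
    rw [part2_mono_other (c := red) h1] at hs; exact hs
  · -- s purple
    rw [part2_purple h1] at hs
    rcases chi_cases hfull t with h2 | h2 | h2
    · rw [part2_mono_other (c := blue) h2] at ht; exact ht
    · -- t mono blue
      have hst : s ≠ t := by
        intro hc; rw [hc, h2] at h1; exact pair_ne_singleton blue h1.symm
      rcases hs with hA | hB
      · have := openCell_inter_cellSet (G := G) hst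
        rw [Set.eq_empty_iff_forall_notMem] at this
        exact this p ⟨cellA_sub_openCell s red hA, hpt⟩
      · have hpMR : p ∈ MRset G := hB.2.2.mpr rfl
        obtain ⟨w, hw1, hw2⟩ := mem_MRset.mp hpMR
        exact mono_mono_disjoint pa (c := red) hw1 h2 hw2 hpt
    · -- t purple
      rw [part2_purple h2] at ht
      rcases hs with hA | hB <;> rcases ht with hA' | hB'
      · by_cases hst : s = t
        · subst hst
          have := cellA_disjoint (ccx s) (ccy s)
          rw [Set.eq_empty_iff_forall_notMem] at this
          exact this p ⟨hA, hA'⟩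
        · have := openCell_inter_cellSet (G := G) hst
          rw [Set.eq_empty_iff_forall_notMem] at this
          exact this p ⟨cellA_sub_openCell s red hA, hpt⟩
      · by_cases hst : s = t
        · subst hst; exact hB'.2.1 (cellA_sub_openCell s red hA)
        · have := openCell_inter_cellSet (G := G) hst
          rw [Set.eq_empty_iff_forall_notMem] at this
          exact this p ⟨cellA_sub_openCell s red hA, hpt⟩
      · by_cases hst : t = s
        · subst hst; exact hB.2.1 (cellA_sub_openCell t blue hA')
        · have := openCell_inter_cellSet (G := G) hst
          rw [Set.eq_empty_iff_forall_notMem] at this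
          exact this p ⟨cellA_sub_openCell t blue hA', hps⟩
      · have h3 := hB.2.2.mpr rfl
        have h4 := hB'.2.2.mp h3
        cases h4

/-- the new painting -/
noncomputable def painting2 (G : ColoredGrid) (pa : G.Painting)
    (hfull : ∀ s, (G.chi s).Nonempty) : G.Painting where
  part := part2 G
  part_subset := part2_subset
  part_nonempty := fun s c h => part2_nonempty hfull s c h
  part_empty := fun s c h => part2_empty hfull s c h
  part_covers := fun s _ => part2_covers hfull s
  colors_disjoint := part2_disjoint pa hfull
  colors_connected := fun c => U2_nicelyConnected pa hfull c

end ColoredGrid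

/-- If a fully 2-colored grid (no white cells) admits a painting,
then it admits a 2-painting: a painting in which every panel consists of at most
two pieces. -/
theorem two_painting (G : ColoredGrid) (hfull : ∀ s, (G.chi s).Nonempty)
    (h : Nonempty G.Painting) :
    ∃ pa : G.Painting, ∀ s, G.piecesLE pa s 2 := by
  classical
  obtain ⟨pa⟩ := h
  refine ⟨ColoredGrid.painting2 G pa hfull, fun s => ?_⟩
  refine ⟨{ColoredGrid.part2 G s PColor.red, ColoredGrid.part2 G s PColor.blue}, ?_, ?_⟩
  · exact le_trans (Finset.card_insert_le _ _) (by simp)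
  · intro c x hx
    have hpre := ColoredGrid.part2_preconnected hfull s c
    have hx' : x ∈ ColoredGrid.part2 G s c := hx
    have heq : (ColoredGrid.painting2 G pa hfull).part = ColoredGrid.part2 G := rfl
    rw [heq, hpre.connectedComponentIn hx']
    cases c
    · exact Finset.mem_insert_self _ _
    · exact Finset.mem_insert_of_mem (Finset.mem_singleton_self _)
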